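/- arXiv:1011.1562 — 2 statements merged into one kernel-verified Lean document; each statement's English description precedes it below -/
import Mathlib

section
/- Let (X, μ, ν, ∗, ⋄) be a complete intuitionistic fuzzy metric space with property ♠ in which every IF contractive sequence is a Cauchy sequence, and let T : X → X be t-uniformly continuous. If for some positive integer m the iterate T^m is an intuitionistic fuzzy contractive mapping (with some contractive constant k ∈ (0,1)), then T has a unique fixed point. -/
/-!
Every IF contractive map `f` satisfies `μ(x, y, t) ≤ μ(f x, f y, t)`, so its orbit is an IF
contractive sequence, hence Cauchy, hence convergent to some `p`, and `f p` is a limit of the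
same orbit; limits are unique because `∗` is idempotent. Two fixed points `p, q` of `f` give
`1/μ(p, q, t) - 1 ≤ k (1/μ(p, q, t) - 1)` with `k < 1`, forcing `μ(p, q, t) = 1`. Applied to
`f = T^[m]`: `T p` is again a fixed point of `T^[m]`, so `T p = p`, and every fixed point of
`T` is one of `T^[m]`.
-/

open Filter Topology

/-- A continuous t-norm on `[0,1]`. -/
structure IsContTNorm (star : ℝ → ℝ → ℝ) : Prop where
  maps_to : ∀ a ∈ Set.Icc (0:ℝ) 1, ∀ b ∈ Set.Icc (0:ℝ) 1, star a b ∈ Set.Icc (0:ℝ) 1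
  comm : ∀ a ∈ Set.Icc (0:ℝ) 1, ∀ b ∈ Set.Icc (0:ℝ) 1, star a b = star b a
  assoc : ∀ a ∈ Set.Icc (0:ℝ) 1, ∀ b ∈ Set.Icc (0:ℝ) 1, ∀ c ∈ Set.Icc (0:ℝ) 1,
    star (star a b) c = star a (star b c)
  continuous : ContinuousOn (fun p : ℝ × ℝ => star p.1 p.2)
    (Set.Icc (0:ℝ) 1 ×ˢ Set.Icc (0:ℝ) 1)
  star_one : ∀ a ∈ Set.Icc (0:ℝ) 1, star a 1 = a
  mono : ∀ a ∈ Set.Icc (0:ℝ) 1, ∀ b ∈ Set.Icc (0:ℝ) 1, ∀ c ∈ Set.Icc (0:ℝ) 1,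
    ∀ d ∈ Set.Icc (0:ℝ) 1, a ≤ c → b ≤ d → star a b ≤ star c d

/-- A continuous t-conorm on `[0,1]`. -/
structure IsContTConorm (diam : ℝ → ℝ → ℝ) : Prop where
  maps_to : ∀ a ∈ Set.Icc (0:ℝ) 1, ∀ b ∈ Set.Icc (0:ℝ) 1, diam a b ∈ Set.Icc (0:ℝ) 1
  comm : ∀ a ∈ Set.Icc (0:ℝ) 1, ∀ b ∈ Set.Icc (0:ℝ) 1, diam a b = diam b a
  assoc : ∀ a ∈ Set.Icc (0:ℝ) 1, ∀ b ∈ Set.Icc (0:ℝ) 1, ∀ c ∈ Set.Icc (0:ℝ) 1,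
    diam (diam a b) c = diam a (diam b c)
  continuous : ContinuousOn (fun p : ℝ × ℝ => diam p.1 p.2)
    (Set.Icc (0:ℝ) 1 ×ˢ Set.Icc (0:ℝ) 1)
  diam_zero : ∀ a ∈ Set.Icc (0:ℝ) 1, diam a 0 = a
  mono : ∀ a ∈ Set.Icc (0:ℝ) 1, ∀ b ∈ Set.Icc (0:ℝ) 1, ∀ c ∈ Set.Icc (0:ℝ) 1,
    ∀ d ∈ Set.Icc (0:ℝ) 1, a ≤ c → b ≤ d → diam a b ≤ diam c d

/-- An intuitionistic fuzzy metric space structure `(X, μ, ν, ∗, ⋄)` on `X`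
(with the idempotency property (xii)). -/
structure IFMS (X : Type*) where
  mu : X → X → ℝ → ℝ
  nu : X → X → ℝ → ℝ
  star : ℝ → ℝ → ℝ
  dia : ℝ → ℝ → ℝ
  tnorm : IsContTNorm star
  tconorm : IsContTConorm dia
  mu_mem : ∀ x y : X, ∀ t : ℝ, 0 < t → mu x y t ∈ Set.Icc (0:ℝ) 1
  nu_mem : ∀ x y : X, ∀ t : ℝ, 0 < t → nu x y t ∈ Set.Icc (0:ℝ) 1
  sum_le_one : ∀ x y : X, ∀ t : ℝ, 0 < t → mu x y t + nu x y t ≤ 1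
  mu_pos : ∀ x y : X, ∀ t : ℝ, 0 < t → 0 < mu x y t
  mu_eq_one_iff : ∀ x y : X, ∀ t : ℝ, 0 < t → (mu x y t = 1 ↔ x = y)
  mu_symm : ∀ x y : X, ∀ t : ℝ, 0 < t → mu x y t = mu y x t
  mu_triangle : ∀ x y z : X, ∀ s t : ℝ, 0 < s → 0 < t →
    star (mu x y s) (mu y z t) ≤ mu x z (s + t)
  mu_cont : ∀ x y : X, ContinuousOn (mu x y) (Set.Ioi (0:ℝ))
  nu_lt_one : ∀ x y : X, ∀ t : ℝ, 0 < t → nu x y t < 1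
  nu_eq_zero_iff : ∀ x y : X, ∀ t : ℝ, 0 < t → (nu x y t = 0 ↔ x = y)
  nu_symm : ∀ x y : X, ∀ t : ℝ, 0 < t → nu x y t = nu y x t
  nu_triangle : ∀ x y z : X, ∀ s t : ℝ, 0 < s → 0 < t →
    nu x z (s + t) ≤ dia (nu x y s) (nu y z t)
  nu_cont : ∀ x y : X, ContinuousOn (nu x y) (Set.Ioi (0:ℝ))
  star_idem : ∀ a ∈ Set.Ioo (0:ℝ) 1, star a a = a
  dia_idem : ∀ a ∈ Set.Ioo (0:ℝ) 1, dia a a = a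

namespace IFMS

variable {X : Type*}

/-- Convergence of a sequence in an IFMS. -/
def Converges (A : IFMS X) (x : ℕ → X) (l : X) : Prop :=
  ∀ t : ℝ, 0 < t →
    Tendsto (fun n => A.mu (x n) l t) atTop (𝓝 1) ∧
    Tendsto (fun n => A.nu (x n) l t) atTop (𝓝 0)

/-- Cauchy sequences in an IFMS. -/
def IsCauchySeq (A : IFMS X) (x : ℕ → X) : Prop :=
  ∀ r ∈ Set.Ioo (0:ℝ) 1, ∀ t : ℝ, 0 < t → ∃ n₀ : ℕ, ∀ n ≥ n₀, ∀ m ≥ n₀,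
    1 - r < A.mu (x n) (x m) t ∧ A.nu (x n) (x m) t < r

/-- Completeness of an IFMS. -/
def Complete (A : IFMS X) : Prop :=
  ∀ x : ℕ → X, A.IsCauchySeq x → ∃ l : X, A.Converges x l

/-- Property ♠. -/
def PropertySpade (A : IFMS X) : Prop :=
  ∀ x y : X,
    Tendsto (fun t => A.mu x y t) atTop (𝓝 1) ∧
    Tendsto (fun t => A.nu x y t) atTop (𝓝 0)

/-- Intuitionistic fuzzy contractive mapping with contractive constant `k`. -/
def IFContractiveWith (A : IFMS X) (k : ℝ) (f : X → X) : Prop :=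
  ∀ x y : X, ∀ t : ℝ, 0 < t →
    1 / A.mu (f x) (f y) t - 1 ≤ k * (1 / A.mu x y t - 1) ∧
    1 / A.nu (f x) (f y) t - 1 ≥ (1 / k) * (1 / A.nu x y t - 1)

/-- Intuitionistic fuzzy contractive sequence. -/
def IFContractiveSeq (A : IFMS X) (x : ℕ → X) : Prop :=
  ∃ k ∈ Set.Ioo (0:ℝ) 1, ∀ n : ℕ, ∀ t : ℝ, 0 < t →
    1 / A.mu (x (n + 1)) (x (n + 2)) t - 1 ≤ k * (1 / A.mu (x n) (x (n + 1)) t - 1) ∧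
    1 / A.nu (x (n + 1)) (x (n + 2)) t - 1 ≥ (1 / k) * (1 / A.nu (x n) (x (n + 1)) t - 1)

/-- t-uniform continuity. -/
def TUniformlyContinuous (A : IFMS X) (f : X → X) : Prop :=
  ∀ ε ∈ Set.Ioo (0:ℝ) 1, ∃ r ∈ Set.Ioo (0:ℝ) 1, ∀ x y : X, ∀ t : ℝ, 0 < t →
    1 - r ≤ A.mu x y t → A.nu x y t ≤ r →
    1 - ε ≤ A.mu (f x) (f y) t ∧ A.nu (f x) (f y) t ≤ ε

/-- TS-IF contractive mapping with contraction constant `k`. -/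
def TSIFContractiveWith (A : IFMS X) (k : ℝ) (T : X → X) : Prop :=
  ∀ x y : X, ∀ t : ℝ, 0 < t →
    A.mu x y t ≤ k * A.mu (T x) (T y) t ∧
    (1 / k) * A.nu (T x) (T y) t ≤ A.nu x y t

end IFMS

open Function

namespace IFMS

variable {X : Type*} (A : IFMS X)

theorem eq_of_tendsto_mu_one {x : ℕ → X} {p q : X} {t : ℝ} (ht : 0 < t)
    (hp : Tendsto (fun n => A.mu (x n) p t) atTop (𝓝 1))
    (hq : Tendsto (fun n => A.mu (x n) q t) atTop (𝓝 1)) : p = q := by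
  have htt : 0 < t + t := add_pos ht ht
  refine (A.mu_eq_one_iff p q (t + t) htt).mp (le_antisymm (A.mu_mem p q _ htt).2 ?_)
  by_contra! hlt
  obtain ⟨c, hc, hc1⟩ := exists_between hlt
  have hc0 : 0 < c := (A.mu_pos p q _ htt).trans hc
  obtain ⟨n, hpn, hqn⟩ :=
    ((hp.eventually (eventually_gt_nhds hc1)).and (hq.eventually (eventually_gt_nhds hc1))).exists
  have hcI : c ∈ Set.Icc (0 : ℝ) 1 := ⟨hc0.le, hc1.le⟩
  have : c ≤ A.mu p q (t + t) :=
    calc c = A.star c c := (A.star_idem c ⟨hc0, hc1⟩).symm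
      _ ≤ A.star (A.mu p (x n) t) (A.mu (x n) q t) := by
        rw [A.mu_symm p (x n) t ht]
        exact A.tnorm.mono c hcI c hcI _ (A.mu_mem _ _ t ht) _ (A.mu_mem _ _ t ht) hpn.le hqn.le
      _ ≤ A.mu p q (t + t) := A.mu_triangle p (x n) q t t ht ht
  linarith

namespace IFContractiveWith

variable {A} {k : ℝ} {f : X → X}

theorem mu_le_mu_map (hf : A.IFContractiveWith k f) (hk : k ≤ 1) (x y : X) {t : ℝ} (ht : 0 < t) :
    A.mu x y t ≤ A.mu (f x) (f y) t := by
  have hxy : 0 ≤ 1 / A.mu x y t - 1 :=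
    sub_nonneg.mpr (one_le_one_div (A.mu_pos x y t ht) (A.mu_mem x y t ht).2)
  have := (hf x y t ht).1.trans (mul_le_of_le_one_left hxy hk)
  exact le_of_one_div_le_one_div (A.mu_pos _ _ t ht) (by linarith)

theorem tendsto_mu_map (hf : A.IFContractiveWith k f) (hk : k ≤ 1) {x : ℕ → X} {p : X} {t : ℝ}
    (ht : 0 < t) (hx : Tendsto (fun n => A.mu (x n) p t) atTop (𝓝 1)) :
    Tendsto (fun n => A.mu (f (x n)) (f p) t) atTop (𝓝 1) :=
  tendsto_of_tendsto_of_tendsto_of_le_of_le hx tendsto_const_nhds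
    (fun n => hf.mu_le_mu_map hk (x n) p ht) (fun _ => (A.mu_mem _ _ t ht).2)

theorem eq_of_isFixedPt (hf : A.IFContractiveWith k f) (hk : k < 1) {p q : X}
    (hp : IsFixedPt f p) (hq : IsFixedPt f q) : p = q := by
  have h := (hf p q 1 one_pos).1
  rw [hp, hq] at h
  have hle : 1 / A.mu p q 1 ≤ 1 / 1 := by nlinarith
  have hge : 1 ≤ A.mu p q 1 := le_of_one_div_le_one_div (A.mu_pos p q 1 one_pos) hle
  exact (A.mu_eq_one_iff p q 1 one_pos).mp (le_antisymm (A.mu_mem p q 1 one_pos).2 hge)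

theorem ifContractiveSeq_iterate (hf : A.IFContractiveWith k f) (hk : k ∈ Set.Ioo (0 : ℝ) 1)
    (x₀ : X) : A.IFContractiveSeq (fun n => f^[n] x₀) :=
  ⟨k, hk, fun n t ht => by
    simpa only [iterate_succ_apply'] using hf (f^[n] x₀) (f^[n + 1] x₀) t ht⟩

theorem exists_isFixedPt [Nonempty X] (hcomp : A.Complete)
    (hcs : ∀ x : ℕ → X, A.IFContractiveSeq x → A.IsCauchySeq x)
    (hf : A.IFContractiveWith k f) (hk : k ∈ Set.Ioo (0 : ℝ) 1) : ∃ p, IsFixedPt f p := by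
  obtain ⟨x₀⟩ := ‹Nonempty X›
  obtain ⟨p, hp⟩ := hcomp _ (hcs _ (hf.ifContractiveSeq_iterate hk x₀))
  have hlim := (hp 1 one_pos).1
  refine ⟨p, A.eq_of_tendsto_mu_one one_pos ?_ (hlim.comp (tendsto_add_atTop_nat 1))⟩
  simpa only [iterate_succ_apply'] using hf.tendsto_mu_map hk.2.le one_pos hlim

end IFContractiveWith

end IFMS

theorem fixed_point_of_power_contractive_general {X : Type*} [Nonempty X] (A : IFMS X)
    (hcomp : A.Complete)
    (hcs : ∀ x : ℕ → X, A.IFContractiveSeq x → A.IsCauchySeq x)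
    (T : X → X)
    (m : ℕ) (k : ℝ) (hk : k ∈ Set.Ioo (0:ℝ) 1)
    (hTm : A.IFContractiveWith k (T^[m])) :
    ∃! p : X, T p = p := by
  obtain ⟨p, hp⟩ := hTm.exists_isFixedPt hcomp hcs hk
  have hTp : IsFixedPt (T^[m]) (T p) := hp.map (Commute.self_iterate T m)
  exact ⟨p, hTm.eq_of_isFixedPt hk.2 hTp hp,
    fun q hq => hTm.eq_of_isFixedPt hk.2 (IsFixedPt.iterate hq m) hp⟩

/-- if some iterate `T^m` is IF contractive and `T` is t-uniformly
continuous, then `T` has a unique fixed point. -/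
theorem fixed_point_of_power_contractive {X : Type*} [Nonempty X] (A : IFMS X)
    (hcomp : A.Complete) (hspade : A.PropertySpade)
    (hcs : ∀ x : ℕ → X, A.IFContractiveSeq x → A.IsCauchySeq x)
    (T : X → X) (hT : A.TUniformlyContinuous T)
    (m : ℕ) (hm : 0 < m) (k : ℝ) (hk : k ∈ Set.Ioo (0:ℝ) 1)
    (hTm : A.IFContractiveWith k (T^[m])) :
    ∃! p : X, T p = p :=
  fixed_point_of_power_contractive_general A hcomp hcs T m k hk hTm
end

section
/- Let (X, μ, ν, ∗, ⋄) be an intuitionistic fuzzy metric space. If f : X → X is an intuitionistic fuzzy contractive mapping with contractive constant k ∈ (0,1), then f is t-uniformly continuous. -/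
open Filter Topology

/-!
Because `k ≤ 1`, the two contractive inequalities say that `f` can only increase `μ` and
decrease `ν` pointwise; hence `r = ε` witnesses t-uniform continuity.
-/

namespace IFMS

variable {X : Type*} {A : IFMS X} {k : ℝ} {f : X → X}

theorem IFContractiveWith.mu_le_mu_map_s10 (hf : A.IFContractiveWith k f) (hk : k ≤ 1)
    (x y : X) {t : ℝ} (ht : 0 < t) : A.mu x y t ≤ A.mu (f x) (f y) t := by
  have hμ := A.mu_pos x y t ht
  have hdist : 0 ≤ 1 / A.mu x y t - 1 :=
    sub_nonneg.2 (one_le_one_div hμ (A.mu_mem x y t ht).2)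
  have hinv : 1 / A.mu (f x) (f y) t ≤ 1 / A.mu x y t := by
    linarith [(hf x y t ht).1, mul_le_of_le_one_left hdist hk]
  exact (one_div_le_one_div (A.mu_pos (f x) (f y) t ht) hμ).1 hinv

theorem IFContractiveWith.nu_map_le_nu (hf : A.IFContractiveWith k f) (hk₀ : 0 < k)
    (hk₁ : k ≤ 1) (x y : X) {t : ℝ} (ht : 0 < t) : A.nu (f x) (f y) t ≤ A.nu x y t := by
  rcases (A.nu_mem (f x) (f y) t ht).1.eq_or_lt with hfν | hfν
  · exact hfν ▸ (A.nu_mem x y t ht).1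
  -- `ν x y t = 0` must be excluded separately: there `1 / ν x y t = 0` in Lean.
  rcases (A.nu_mem x y t ht).1.eq_or_lt with hν | hν
  · obtain rfl := (A.nu_eq_zero_iff x y t ht).1 hν.symm
    exact absurd ((A.nu_eq_zero_iff (f x) (f x) t ht).2 rfl) hfν.ne'
  have hdist : 0 ≤ 1 / A.nu x y t - 1 :=
    sub_nonneg.2 (one_le_one_div hν (A.nu_mem x y t ht).2)
  have hinv : 1 / A.nu x y t ≤ 1 / A.nu (f x) (f y) t := by
    linarith [(hf x y t ht).2, le_mul_of_one_le_left hdist (one_le_one_div hk₀ hk₁)]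
  exact (one_div_le_one_div hν hfν).1 hinv

theorem tUniformlyContinuous_of_mu_le_of_nu_le
    (hf : ∀ x y t, 0 < t → A.mu x y t ≤ A.mu (f x) (f y) t ∧ A.nu (f x) (f y) t ≤ A.nu x y t) :
    A.TUniformlyContinuous f := fun ε hε =>
  ⟨ε, hε, fun x y t ht hμ hν =>
    ⟨hμ.trans (hf x y t ht).1, (hf x y t ht).2.trans hν⟩⟩

end IFMS

/-- an IF contractive mapping is t-uniformly continuous. -/
theorem ifContractive_tUniformlyContinuous {X : Type*} (A : IFMS X)
    (f : X → X) (k : ℝ) (hk : k ∈ Set.Ioo (0:ℝ) 1)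
    (hf : A.IFContractiveWith k f) :
    A.TUniformlyContinuous f :=
  IFMS.tUniformlyContinuous_of_mu_le_of_nu_le fun x y _ ht =>
    ⟨hf.mu_le_mu_map_s10 hk.2.le x y ht, hf.nu_map_le_nu hk.1 hk.2.le x y ht⟩
end
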